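/- Let G be a symmetric numerical semigroup with minimal generators n₁ < ⋯ < n_d and Frobenius number f. Then ord_G(f + n₁) = max{ord_G(w) : w ∈ Ap(G, n₁)}; that is, the maximum of ord_G over the Apéry set with respect to n₁ is attained at its largest element f + n₁. -/

import Mathlib

/-- The numerical semigroup generated by `n 0, …, n (d-1)`. -/
def semigroupGen (d : ℕ) (n : Fin d → ℕ) : Set ℕ :=
  {z | ∃ a : Fin d → ℕ, ∑ i, a i * n i = z}

/-- The set of lengths `∑ aᵢ` of representations `z = ∑ aᵢ nᵢ`. -/
def repLengths (d : ℕ) (n : Fin d → ℕ) (z : ℕ) : Set ℕ :=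
  {s | ∃ a : Fin d → ℕ, (∑ i, a i * n i = z) ∧ (∑ i, a i = s)}

/-- Membership of an integer in the numerical semigroup. -/
def memZ (d : ℕ) (n : Fin d → ℕ) (z : ℤ) : Prop :=
  ∃ x ∈ semigroupGen d n, (x : ℤ) = z

/-- `G` is symmetric with respect to the Frobenius number `f`. -/
def IsSymmetricWith (d : ℕ) (n : Fin d → ℕ) (f : ℕ) : Prop :=
  ∀ z : ℤ, memZ d n z ↔ ¬ memZ d n ((f : ℤ) - z)

/-- The given generators are a minimal generating system. -/
def MinimallyGenerated (d : ℕ) (n : Fin d → ℕ) : Prop :=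
  ∀ i : Fin d, ¬ ∃ a : Fin d → ℕ, a i = 0 ∧ ∑ j, a j * n j = n i

/-- The Apéry set of the semigroup with respect to `e`. -/
def aperySet (d : ℕ) (n : Fin d → ℕ) (e : ℕ) : Set ℕ :=
  {x | x ∈ semigroupGen d n ∧ ¬ ∃ y ∈ semigroupGen d n, y + e = x}

/-!
Since `0 ∈ G` and no negative integer lies in `G`, symmetry makes `f` the Frobenius number, so
`f + e ∈ Ap(G, e)` for every `e > 0`.
For `w ∈ Ap(G, e)` we have `w - e ∉ G`, hence `f + e - w ∈ G` by symmetry; concatenating a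
representation of `f + e - w` with a maximal one of `w` gives a representation of `f + e` that is
at least as long, so `ord_G(w) ≤ ord_G(f + e)`.
-/

section NumericalSemigroup

variable {d : ℕ} {n : Fin d → ℕ}

theorem zero_mem_semigroupGen : 0 ∈ semigroupGen d n :=
  ⟨0, by simp⟩

theorem memZ_natCast_iff {x : ℕ} : memZ d n x ↔ x ∈ semigroupGen d n := by
  refine ⟨?_, fun hx => ⟨x, hx, rfl⟩⟩
  rintro ⟨y, hy, hyx⟩
  rwa [← Int.ofNat_inj.mp hyx]

theorem not_memZ_of_neg {z : ℤ} (hz : z < 0) : ¬ memZ d n z := by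
  rintro ⟨x, -, rfl⟩
  omega

theorem nonempty_repLengths {z : ℕ} (hz : z ∈ semigroupGen d n) :
    ∃ s, s ∈ repLengths d n z := by
  obtain ⟨a, ha⟩ := hz
  exact ⟨_, a, ha, rfl⟩

theorem add_mem_repLengths {x y s t : ℕ} (hs : s ∈ repLengths d n x)
    (ht : t ∈ repLengths d n y) : s + t ∈ repLengths d n (x + y) := by
  obtain ⟨a, rfl, rfl⟩ := hs
  obtain ⟨b, rfl, rfl⟩ := ht
  refine ⟨a + b, ?_, ?_⟩ <;> simp only [Pi.add_apply, add_mul, Finset.sum_add_distrib]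

namespace IsSymmetricWith

variable {f : ℕ} (hsym : IsSymmetricWith d n f)
include hsym

theorem not_mem : f ∉ semigroupGen d n := by
  have h := hsym f
  rw [sub_self, memZ_natCast_iff] at h
  exact fun hf => h.mp hf (memZ_natCast_iff.mpr zero_mem_semigroupGen)

theorem mem_of_lt {m : ℕ} (hm : f < m) : m ∈ semigroupGen d n :=
  memZ_natCast_iff.mp ((hsym m).mpr (not_memZ_of_neg (by omega)))

theorem add_mem_aperySet {e : ℕ} (he : 0 < e) : f + e ∈ aperySet d n e := by
  refine ⟨hsym.mem_of_lt (by omega), ?_⟩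
  rintro ⟨y, hy, hye⟩
  obtain rfl : y = f := by omega
  exact hsym.not_mem hy

theorem exists_add_eq_of_mem_aperySet {e w : ℕ} (hw : w ∈ aperySet d n e) :
    ∃ x ∈ semigroupGen d n, x + w = f + e := by
  have hwe : ¬ memZ d n ((w : ℤ) - e) := by
    rintro ⟨y, hy, hye⟩
    exact hw.2 ⟨y, hy, by omega⟩
  have hcompl : memZ d n ((f : ℤ) - (w - e)) := by
    by_contra h
    exact hwe ((hsym _).mpr h)
  obtain ⟨x, hx, hxe⟩ := hcompl
  exact ⟨x, hx, by omega⟩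

end IsSymmetricWith

end NumericalSemigroup

theorem stmt_5 (d : ℕ) (hd : 0 < d) (n : Fin d → ℕ)
    (hpos : ∀ i, 0 < n i)
    (f : ℕ)
    (hsym : IsSymmetricWith d n f)
    (o : ℕ) (ho : IsGreatest (repLengths d n (f + n ⟨0, hd⟩)) o) :
    f + n ⟨0, hd⟩ ∈ aperySet d n (n ⟨0, hd⟩) ∧
      IsGreatest {s | ∃ w ∈ aperySet d n (n ⟨0, hd⟩),
        IsGreatest (repLengths d n w) s} o := by
  have hAp := hsym.add_mem_aperySet (hpos ⟨0, hd⟩)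
  refine ⟨hAp, ⟨_, hAp, ho⟩, ?_⟩
  rintro s ⟨w, hw, hws⟩
  obtain ⟨x, hx, hxw⟩ := hsym.exists_add_eq_of_mem_aperySet hw
  obtain ⟨t, ht⟩ := nonempty_repLengths hx
  have hle := ho.2 (hxw ▸ add_mem_repLengths ht hws.1)
  omega
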